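/- Let q ≥ 4 be a power of a prime p and fix T > 0. Define μ_q(n) = ∏_{d | n} G_q(d), where G_q(d) = (1 − q^{−e_q(d)})^{φ(d)/e_q(d)} if gcd(d, p) = 1 and G_q(d) = 1 otherwise. Then there exists a constant C > 0 such that for all real x ≥ C, the number of positive integers n ≤ x with μ_q(n) < 1 − 1/q − 1/√q − T is at most x/(1 + T√q). -/

import Mathlib

/-!
Write `u = q^{-1/2}`. Bernoulli's inequality gives `G_q(d) ≥ 1 - w(d)` with
`w(d) = ⌊φ(d)/e_q(d)⌋ q^{-e_q(d)}`, so `μ_q(n) ≥ 1 - ∑_{d ∣ n} w(d)`, and swapping sums,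
`∑_{n ≤ x} μ_q(n) ≥ ⌊x⌋ - x ∑_{d ≤ x} w(d)/d`. The `d > 1` with `e_q(d) = e` divide
`q^e - 1`, and `∑_{d ∣ N} φ(d)/d ≤ √(N+1)`, so together they contribute at most
`(u^e - u^{2e})/e`; summing over `e` gives `∑_{d ≤ x} w(d)/d ≤ u² + u - u²/6`.
Since `μ_q(n) ≤ 1 - u²` for every `n`, and `μ_q(n) < 1 - u² - u - T` on the exceptional set,
comparing the two bounds for `∑_{n ≤ x} μ_q(n)` shows that the exceptional set has at most
`x u / (u + T)` elements.
-/

open Finset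

lemma one_sub_sum_le_prod {ι R : Type*} [CommRing R] [LinearOrder R] [IsStrictOrderedRing R]
    {s : Finset ι} {f w : ι → R} (hf0 : ∀ i ∈ s, 0 ≤ f i) (hf1 : ∀ i ∈ s, f i ≤ 1)
    (hfw : ∀ i ∈ s, 1 - w i ≤ f i) :
    1 - ∑ i ∈ s, w i ≤ ∏ i ∈ s, f i := by
  induction s using Finset.cons_induction with
  | empty => simp
  | cons a s ha ih =>
    simp only [mem_cons, forall_eq_or_imp] at hf0 hf1 hfw
    have hP0 : 0 ≤ ∏ i ∈ s, f i := prod_nonneg hf0.2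
    have hP1 : ∏ i ∈ s, f i ≤ 1 := prod_le_one hf0.2 hf1.2
    have hP := ih hf0.2 hf1.2 hfw.2
    rw [prod_cons, sum_cons]
    nlinarith [mul_nonneg (sub_nonneg.2 hfw.1) hP0,
      mul_nonneg (sub_nonneg.2 hf1.1) (sub_nonneg.2 hP1)]

lemma card_filter_lt_mul_sub_le {ι : Type*} (s : Finset ι) (f : ι → ℝ) {a c : ℝ}
    (hf : ∀ i ∈ s, f i ≤ a) :
    (#(s.filter (f · < c)) : ℝ) * (a - c) ≤ #s * a - ∑ i ∈ s, f i := by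
  have hlt : ∑ i ∈ s.filter (f · < c), f i ≤ #(s.filter (f · < c)) * c := by
    simpa using sum_le_card_nsmul _ f c fun i hi => (mem_filter.1 hi).2.le
  have hge : ∑ i ∈ s.filter (¬ f · < c), f i ≤ #(s.filter (¬ f · < c)) * a := by
    simpa using sum_le_card_nsmul _ f a fun i hi => hf i (mem_filter.1 hi).1
  have hcard : (#(s.filter (f · < c)) : ℝ) + #(s.filter (¬ f · < c)) = #s := by
    exact_mod_cast card_filter_add_card_filter_not (fun i => f i < c)
  rw [← sum_filter_add_sum_filter_not s (f · < c), ← hcard]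
  linarith

lemma sum_pow_sub_pow_div_le {u : ℝ} (hu0 : 0 ≤ u) (hu : u ≤ 1 / 2) (E : Finset ℕ) :
    ∑ e ∈ E, (u ^ e - u ^ (2 * e)) / e ≤ u - u ^ 2 / 6 := by
  have hterm : ∀ e : ℕ, 0 ≤ (u ^ e - u ^ (2 * e)) / e := fun e =>
    div_nonneg (sub_nonneg.2 (pow_le_pow_of_le_one hu0 (by linarith) (by omega)))
      (Nat.cast_nonneg _)
  obtain ⟨n, hn⟩ := E.exists_nat_subset_range
  have hsub : E ⊆ range (n + 3) := hn.trans (range_subset_range.2 (by omega))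
  refine (sum_le_sum_of_subset_of_nonneg hsub fun e _ _ => hterm e).trans ?_
  rw [← sum_range_add_sum_Ico _ (by omega : 3 ≤ n + 3)]
  have hhead : ∑ e ∈ range 3, (u ^ e - u ^ (2 * e)) / e = u - u ^ 2 + (u ^ 2 - u ^ 4) / 2 := by
    simp [sum_range_succ]
  have htail : ∑ e ∈ Ico 3 (n + 3), (u ^ e - u ^ (2 * e)) / e ≤ u ^ 3 / (1 - u) / 3 := by
    calc ∑ e ∈ Ico 3 (n + 3), (u ^ e - u ^ (2 * e)) / e
        ≤ ∑ e ∈ Ico 3 (n + 3), u ^ e / 3 := by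
          refine sum_le_sum fun e he => ?_
          have he3 : (3 : ℝ) ≤ e := by exact_mod_cast (mem_Ico.1 he).1
          calc (u ^ e - u ^ (2 * e)) / e ≤ u ^ e / e := by
                gcongr; exact sub_le_self _ (by positivity)
            _ ≤ u ^ e / 3 := by gcongr
      _ ≤ u ^ 3 / (1 - u) / 3 := by
          rw [← sum_div]; gcongr; exact geom_sum_Ico_le_of_lt_one hu0 (by linarith)
  have hgeom : u ^ 3 / (1 - u) ≤ 2 * u ^ 3 := by
    rw [div_le_iff₀ (by linarith)]; nlinarith [pow_nonneg hu0 3]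
  rw [hhead]
  nlinarith [pow_nonneg hu0 4, pow_nonneg hu0 2]

lemma one_add_mul_sq_le_mul_pow {L c : ℝ} (hL : 2 ≤ L) {a₀ : ℕ} (ha₀ : 1 ≤ a₀)
    (hbase : (1 + a₀ * (1 - 1 / L)) ^ 2 ≤ c * L ^ a₀) {a : ℕ} (ha : a₀ ≤ a) :
    (1 + a * (1 - 1 / L)) ^ 2 ≤ c * L ^ a := by
  induction a, ha using Nat.le_induction with
  | base => exact hbase
  | succ a ha ih =>
    set t := 1 - 1 / L
    have ht : 1 / 2 ≤ t ∧ t < 1 := by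
      have : 1 / L ≤ 1 / 2 := one_div_le_one_div_of_le two_pos hL
      have : 0 < 1 / L := one_div_pos.2 (by linarith)
      constructor <;> linarith
    have hLt : L * (1 - t) = 1 := by simp only [t]; field_simp; ring
    have hy : 1 + t ≤ 1 + a * t := by
      have : (1 : ℝ) ≤ a := by exact_mod_cast (ha₀.trans ha)
      nlinarith
    -- the ratio `(1 + (a+1) t) / (1 + a t)` is at most `(1 + 2t) / (1 + t) ≤ √L`
    have hstep : (1 + (a + 1 : ℕ) * t) ^ 2 ≤ L * (1 + a * t) ^ 2 := by
      push_cast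
      nlinarith [mul_nonneg (sub_nonneg.2 hy) (sub_nonneg.2 hy), ht.1, ht.2]
    calc (1 + (a + 1 : ℕ) * t) ^ 2 ≤ L * (1 + a * t) ^ 2 := hstep
      _ ≤ L * (c * L ^ a) := by gcongr
      _ = c * L ^ (a + 1) := by ring

lemma inv_natCast_pow_le_one (q e : ℕ) : ((q : ℝ) ^ e)⁻¹ ≤ 1 := by
  rw [← inv_pow]
  exact pow_le_one₀ (inv_nonneg.2 (Nat.cast_nonneg q)) (Nat.cast_inv_le_one q)

noncomputable def totientRatio : ArithmeticFunction ℝ :=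
  ⟨fun d => (d.totient : ℝ) / d, by simp⟩

lemma totientRatio_apply (d : ℕ) : totientRatio d = (d.totient : ℝ) / d := rfl

lemma isMultiplicative_totientRatio : totientRatio.IsMultiplicative := by
  refine ⟨by simp [totientRatio_apply], fun {a b} hab => ?_⟩
  simp only [totientRatio_apply, Nat.totient_mul hab, Nat.cast_mul]
  exact mul_div_mul_comm _ _ _ _

noncomputable def totientRatioSum (N : ℕ) : ℝ := ∑ d ∈ N.divisors, totientRatio d

lemma totientRatioSum_mul {a b : ℕ} (hab : a.Coprime b) :
    totientRatioSum (a * b) = totientRatioSum a * totientRatioSum b := by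
  have h := (ArithmeticFunction.isMultiplicative_zeta.natCast.mul
    isMultiplicative_totientRatio).map_mul_of_coprime hab
  simp only [ArithmeticFunction.coe_zeta_mul_apply] at h
  exact h

@[simp] lemma totientRatioSum_one : totientRatioSum 1 = 1 := by
  simp [totientRatioSum, totientRatio_apply]

lemma totientRatioSum_prime_pow {ℓ : ℕ} (hℓ : ℓ.Prime) (a : ℕ) :
    totientRatioSum (ℓ ^ a) = 1 + a * (1 - 1 / (ℓ : ℝ)) := by
  have hℓ0 : (ℓ : ℝ) ≠ 0 := by exact_mod_cast hℓ.ne_zero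
  have hterm : ∀ i ∈ range a, totientRatio (ℓ ^ (i + 1)) = 1 - 1 / ℓ := by
    intro i _
    rw [totientRatio_apply, Nat.totient_prime_pow_succ hℓ, Nat.cast_mul, Nat.cast_sub hℓ.one_le]
    field_simp
    push_cast
    ring
  rw [totientRatioSum, Nat.sum_divisors_prime_pow hℓ, sum_range_succ', sum_congr rfl hterm]
  simp only [sum_const, card_range, nsmul_eq_mul, pow_zero, totientRatio_apply, Nat.totient_one,
    Nat.cast_one, div_one]
  ring

lemma totientRatioSum_prime_pow_sq_le {ℓ a₀ a : ℕ} {c : ℝ} (hℓ : ℓ.Prime)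
    (ha₀ : 1 ≤ a₀) (hbase : (1 + a₀ * (1 - 1 / (ℓ : ℝ))) ^ 2 ≤ c * ℓ ^ a₀)
    (ha : a₀ ≤ a) :
    totientRatioSum (ℓ ^ a) ^ 2 ≤ c * (ℓ ^ a : ℕ) := by
  rw [totientRatioSum_prime_pow hℓ, Nat.cast_pow]
  exact one_add_mul_sq_le_mul_pow (by exact_mod_cast hℓ.two_le) ha₀ hbase ha

lemma totientRatioSum_sq_le_of_odd {N : ℕ} (hN : Odd N) : totientRatioSum N ^ 2 ≤ N := by
  induction N using Nat.recOnPosPrimePosCoprime with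
  | zero => simp at hN
  | one => simp
  | prime_pow ℓ a hℓ ha =>
    have h3 : (3 : ℝ) ≤ ℓ := by
      have : ℓ ≠ 2 := by rintro rfl; simp [Nat.odd_pow_iff ha.ne', Nat.odd_iff] at hN
      exact_mod_cast (hℓ.two_le.lt_of_ne' this)
    have hbase : (1 + ((1 : ℕ) : ℝ) * (1 - 1 / (ℓ : ℝ))) ^ 2 ≤ 1 * (ℓ : ℝ) ^ 1 := by
      have : (ℓ : ℝ) * (1 / ℓ) = 1 := by field_simp
      push_cast
      nlinarith [one_div_pos.2 (by linarith : (0:ℝ) < ℓ)]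
    simpa using totientRatioSum_prime_pow_sq_le hℓ le_rfl hbase ha
  | coprime a b _ _ hab iha ihb =>
    obtain ⟨ha, hb⟩ := Nat.odd_mul.1 hN
    rw [totientRatioSum_mul hab, mul_pow, Nat.cast_mul]
    exact mul_le_mul (iha ha) (ihb hb) (sq_nonneg _) (Nat.cast_nonneg _)

lemma totientRatioSum_sq_le_of_odd_of_ne {N : ℕ} (hN : Odd N) (h1 : N ≠ 1) (h3 : N ≠ 3) :
    totientRatioSum N ^ 2 ≤ 8 / 9 * N := by
  induction N using Nat.recOnPosPrimePosCoprime with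
  | zero => simp at hN
  | one => exact absurd rfl h1
  | prime_pow ℓ a hℓ ha =>
    have hℓ2 : ℓ ≠ 2 := by rintro rfl; simp [Nat.odd_pow_iff ha.ne', Nat.odd_iff] at hN
    by_cases hℓ3 : ℓ = 3
    · subst hℓ3
      have ha2 : 2 ≤ a := by
        by_contra! h
        obtain rfl : a = 1 := by omega
        exact h3 rfl
      exact totientRatioSum_prime_pow_sq_le hℓ one_le_two (by norm_num) ha2
    · have h5 : (5 : ℝ) ≤ ℓ := by
        have : ℓ ≠ 4 := by rintro rfl; norm_num at hℓ
        have := hℓ.two_le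
        exact_mod_cast (show 5 ≤ ℓ by omega)
      have hbase :
          (1 + ((1 : ℕ) : ℝ) * (1 - 1 / (ℓ : ℝ))) ^ 2 ≤ 8 / 9 * (ℓ : ℝ) ^ 1 := by
        have : (ℓ : ℝ) * (1 / ℓ) = 1 := by field_simp
        push_cast
        nlinarith [one_div_pos.2 (by linarith : (0:ℝ) < ℓ)]
      exact totientRatioSum_prime_pow_sq_le hℓ le_rfl hbase ha
  | coprime a b ha1 hb1 hab iha ihb =>
    obtain ⟨ha, hb⟩ := Nat.odd_mul.1 hN
    rw [totientRatioSum_mul hab, mul_pow, Nat.cast_mul]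
    rcases eq_or_ne a 3 with rfl | ha3
    · have hb3 : b ≠ 3 := by rintro rfl; norm_num at hab
      calc totientRatioSum 3 ^ 2 * totientRatioSum b ^ 2 ≤ (3 : ℕ) * (8 / 9 * b) :=
            mul_le_mul (totientRatioSum_sq_le_of_odd ha) (ihb hb hb1.ne' hb3) (sq_nonneg _)
              (Nat.cast_nonneg _)
        _ = 8 / 9 * ((3 : ℕ) * b) := by ring
    · calc totientRatioSum a ^ 2 * totientRatioSum b ^ 2 ≤ 8 / 9 * a * b :=
            mul_le_mul (iha ha ha1.ne' ha3) (totientRatioSum_sq_le_of_odd hb) (sq_nonneg _)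
              (by positivity)
        _ = 8 / 9 * (a * b) := by ring

lemma totientRatioSum_sq_le_succ (N : ℕ) : totientRatioSum N ^ 2 ≤ N + 1 := by
  rcases eq_or_ne N 0 with rfl | hN
  · simp [totientRatioSum]
  obtain ⟨k, M, hM, rfl⟩ := Nat.exists_eq_two_pow_mul_odd hN
  have hcop : (2 ^ k).Coprime M := (Nat.coprime_two_left.2 hM).pow_left k
  have hFM := totientRatioSum_sq_le_of_odd hM
  rw [totientRatioSum_mul hcop, mul_pow, Nat.cast_mul]
  obtain rfl | rfl | hk : k = 0 ∨ k = 1 ∨ 2 ≤ k := by omega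
  · simp only [pow_zero, totientRatioSum_one, Nat.cast_one]
    linarith
  · -- the factor `9/4 > 2` at `2` is absorbed by the odd-part bound `8M/9`, unless `M ∈ {1, 3}`
    have hF2 : totientRatioSum (2 ^ 1) ^ 2 = 9 / 4 := by
      rw [totientRatioSum_prime_pow Nat.prime_two]; norm_num
    rw [hF2]
    obtain rfl | rfl | ⟨hM1, hM3⟩ : M = 1 ∨ M = 3 ∨ M ≠ 1 ∧ M ≠ 3 := by omega
    · norm_num
    · have hF3 : totientRatioSum 3 = 5 / 3 := by
        have h := totientRatioSum_prime_pow Nat.prime_three 1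
        norm_num at h
        exact h
      norm_num [hF3]
    · have := totientRatioSum_sq_le_of_odd_of_ne hM hM1 hM3
      push_cast
      linarith
  · have hF2 := totientRatioSum_prime_pow_sq_le (c := 1) Nat.prime_two one_le_two
      (by norm_num) hk
    rw [one_mul] at hF2
    nlinarith [sq_nonneg (totientRatioSum M), sq_nonneg (totientRatioSum (2 ^ k))]

-- When `q` is not a unit mod `d`, `orderOf (q : ZMod d) = 0` and the weight is `0`.
noncomputable def orderWeight (q : ℕ) : ArithmeticFunction ℝ :=
  ⟨fun d => ((d.totient / orderOf (q : ZMod d) : ℕ) : ℝ) *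
    ((q : ℝ) ^ orderOf (q : ZMod d))⁻¹, by simp⟩

lemma orderWeight_apply (q d : ℕ) : orderWeight q d =
    ((d.totient / orderOf (q : ZMod d) : ℕ) : ℝ) * ((q : ℝ) ^ orderOf (q : ZMod d))⁻¹ :=
  rfl

lemma orderWeight_nonneg (q d : ℕ) : 0 ≤ orderWeight q d := by
  rw [orderWeight_apply]; positivity

lemma orderWeight_one (q : ℕ) : orderWeight q 1 = (q : ℝ)⁻¹ := by
  simp [orderWeight_apply, Subsingleton.elim (q : ZMod 1) 1]

lemma orderWeight_div_le {q d e : ℕ} (he : orderOf (q : ZMod d) = e) :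
    orderWeight q d / d ≤ totientRatio d / (e * (q : ℝ) ^ e) := by
  rw [orderWeight_apply, he, totientRatio_apply]
  calc ((d.totient / e : ℕ) : ℝ) * ((q : ℝ) ^ e)⁻¹ / d
      ≤ (d.totient / e : ℝ) * ((q : ℝ) ^ e)⁻¹ / d := by gcongr; exact Nat.cast_div_le
    _ = d.totient / d / (e * (q : ℝ) ^ e) := by ring

lemma dvd_pow_orderOf_sub_one (q d : ℕ) : d ∣ q ^ orderOf (q : ZMod d) - 1 := by
  rcases (q ^ orderOf (q : ZMod d)).eq_zero_or_pos with h0 | hpos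
  · simp [h0]
  have h : ((q ^ orderOf (q : ZMod d) : ℕ) : ZMod d) = ((1 : ℕ) : ZMod d) := by
    push_cast; exact pow_orderOf_eq_one _
  exact (Nat.modEq_iff_dvd' hpos).1 ((ZMod.natCast_eq_natCast_iff _ _ _).1 h).symm

lemma sum_orderWeight_div_filter_orderOf_le {q : ℕ} (hq : 2 ≤ q) {s : Finset ℕ}
    (hs : ∀ d ∈ s, 1 < d) (e : ℕ) :
    ∑ d ∈ s with orderOf (q : ZMod d) = e, orderWeight q d / d ≤
      ((√q)⁻¹ ^ e - (√q)⁻¹ ^ (2 * e)) / e := by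
  rcases eq_or_ne e 0 with rfl | he
  · refine (sum_eq_zero fun d hd => ?_).le.trans (by simp)
    simp [orderWeight_apply, (mem_filter.1 hd).2]
  set S := √q ^ e with hS_def
  have hS : (q : ℝ) ^ e = S ^ 2 := by
    rw [← pow_mul, mul_comm, pow_mul, Real.sq_sqrt (Nat.cast_nonneg q)]
  have hS1 : 1 ≤ S := one_le_pow₀ (Real.one_le_sqrt.2 (by exact_mod_cast (one_le_two.trans hq)))
  have hqe : 1 ≤ q ^ e := Nat.one_le_pow _ _ (by omega)
  have hN : q ^ e - 1 ≠ 0 := by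
    have := Nat.pow_le_pow_left hq e
    have := Nat.one_lt_two_pow he
    omega
  have hsub : s.filter (fun d => orderOf (q : ZMod d) = e) ⊆ (q ^ e - 1).divisors.erase 1 := by
    intro d hd
    obtain ⟨hds, rfl⟩ := mem_filter.1 hd
    exact mem_erase.2 ⟨(hs d hds).ne', Nat.mem_divisors.2 ⟨dvd_pow_orderOf_sub_one q d, hN⟩⟩
  have hF : totientRatioSum (q ^ e - 1) ≤ S := by
    have h := totientRatioSum_sq_le_succ (q ^ e - 1)
    rw [Nat.cast_sub hqe, Nat.cast_pow, Nat.cast_one, sub_add_cancel, hS] at h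
    exact abs_le_of_sq_le_sq' h (by positivity) |>.2
  calc ∑ d ∈ s with orderOf (q : ZMod d) = e, orderWeight q d / d
      ≤ ∑ d ∈ s with orderOf (q : ZMod d) = e, totientRatio d / (e * (q : ℝ) ^ e) :=
        sum_le_sum fun d hd => orderWeight_div_le (mem_filter.1 hd).2
    _ ≤ ∑ d ∈ (q ^ e - 1).divisors.erase 1, totientRatio d / (e * (q : ℝ) ^ e) :=
        sum_le_sum_of_subset_of_nonneg hsub fun d _ _ => by
          rw [totientRatio_apply]; positivity
    _ = (totientRatioSum (q ^ e - 1) - 1) / (e * (q : ℝ) ^ e) := by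
        rw [← sum_div, sum_erase_eq_sub (Nat.one_mem_divisors.2 hN), totientRatioSum]
        simp [totientRatio_apply]
    _ ≤ (S - 1) / (e * S ^ 2) := by rw [hS]; gcongr
    _ = ((√q)⁻¹ ^ e - (√q)⁻¹ ^ (2 * e)) / e := by
        rw [inv_pow, inv_pow, pow_mul', ← hS_def]
        field_simp

lemma sum_Ioc_orderWeight_div_le {q : ℕ} (hq : 4 ≤ q) (X : ℕ) :
    ∑ d ∈ Ioc 0 X, orderWeight q d / d ≤
      (√q)⁻¹ ^ 2 + ((√q)⁻¹ - (√q)⁻¹ ^ 2 / 6) := by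
  set u := (√q)⁻¹ with hu_def
  have hu0 : 0 ≤ u := by positivity
  have hu : u ≤ 1 / 2 := by
    rw [hu_def, one_div]
    refine inv_anti₀ two_pos ((Real.le_sqrt zero_le_two (Nat.cast_nonneg q)).2 ?_)
    exact_mod_cast (by omega : 2 ^ 2 ≤ q)
  rcases Nat.eq_zero_or_pos X with rfl | hX
  · simp only [Ioc_self, sum_empty]; nlinarith
  have hw1 : orderWeight q 1 = u ^ 2 := by
    rw [orderWeight_one, hu_def, inv_pow, Real.sq_sqrt (Nat.cast_nonneg q)]
  rw [← sum_Ioc_consecutive _ zero_le_one hX, (by rfl : Ioc 0 1 = {1}), sum_singleton,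
    Nat.cast_one, div_one, hw1]
  gcongr
  rw [← sum_fiberwise_of_maps_to fun d hd => mem_image_of_mem (fun d => orderOf (q : ZMod d)) hd]
  calc _ ≤ ∑ e ∈ (Ioc 1 X).image (fun d => orderOf (q : ZMod d)), (u ^ e - u ^ (2 * e)) / e :=
        sum_le_sum fun e _ => sum_orderWeight_div_filter_orderOf_le (by omega)
          (fun d hd => (mem_Ioc.1 hd).1) e
    _ ≤ u - u ^ 2 / 6 := sum_pow_sub_pow_div_le hu0 hu _

noncomputable def normalFactor (q p d : ℕ) : ℝ :=
  if Nat.gcd d p = 1 then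
    (1 - ((q : ℝ) ^ orderOf (q : ZMod d))⁻¹) ^ (d.totient / orderOf (q : ZMod d))
  else 1

section normalFactor

variable {q : ℕ} (p d : ℕ)

lemma normalFactor_nonneg : 0 ≤ normalFactor q p d := by
  unfold normalFactor
  split_ifs
  · exact pow_nonneg (sub_nonneg.2 (inv_natCast_pow_le_one _ _)) _
  · exact zero_le_one

lemma normalFactor_le_one : normalFactor q p d ≤ 1 := by
  unfold normalFactor
  split_ifs
  · exact pow_le_one₀ (sub_nonneg.2 (inv_natCast_pow_le_one _ _)) (by simp)
  · exact le_rfl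

lemma one_sub_orderWeight_le_normalFactor : 1 - orderWeight q d ≤ normalFactor q p d := by
  unfold normalFactor
  split_ifs
  · set t := ((q : ℝ) ^ orderOf (q : ZMod d))⁻¹
    have h := one_add_mul_le_pow (a := -t)
      (by linarith [inv_natCast_pow_le_one q (orderOf (q : ZMod d))])
      (d.totient / orderOf (q : ZMod d))
    rw [mul_neg, ← sub_eq_add_neg, ← sub_eq_add_neg] at h
    rw [orderWeight_apply]
    exact h
  · linarith [orderWeight_nonneg q d]

lemma normalFactor_one : normalFactor q p 1 = 1 - (q : ℝ)⁻¹ := by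
  simp [normalFactor, Subsingleton.elim (q : ZMod 1) 1]

lemma prod_normalFactor_le {n : ℕ} (hn : n ≠ 0) :
    ∏ d ∈ n.divisors, normalFactor q p d ≤ 1 - (q : ℝ)⁻¹ := by
  rw [← mul_prod_erase _ _ (Nat.one_mem_divisors.2 hn), normalFactor_one]
  exact mul_le_of_le_one_right (sub_nonneg.2 (by simpa using inv_natCast_pow_le_one q 1))
    (prod_le_one (fun d _ => normalFactor_nonneg p d) fun d _ => normalFactor_le_one p d)

lemma one_sub_sum_orderWeight_le_prod_normalFactor (n : ℕ) :
    1 - ∑ d ∈ n.divisors, orderWeight q d ≤ ∏ d ∈ n.divisors, normalFactor q p d :=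
  one_sub_sum_le_prod (fun d _ => normalFactor_nonneg p d) (fun d _ => normalFactor_le_one p d)
    fun d _ => one_sub_orderWeight_le_normalFactor p d

end normalFactor

lemma ncard_lt_mul_le_of_sum_divisors {μ : ℕ → ℝ} {w : ArithmeticFunction ℝ}
    {a c S x : ℝ} (hx : 0 ≤ x) (hμa : ∀ n, 1 ≤ n → μ n ≤ a)
    (hμw : ∀ n, 1 - ∑ d ∈ n.divisors, w d ≤ μ n) (hw : ∀ d, 0 ≤ w d)
    (hS : ∑ d ∈ Ioc 0 ⌊x⌋₊, w d / d ≤ S) :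
    (Set.ncard {n : ℕ | 1 ≤ n ∧ (n : ℝ) ≤ x ∧ μ n < c} : ℝ) * (a - c) ≤
      x * S - ⌊x⌋₊ * (1 - a) := by
  set X := ⌊x⌋₊
  have hset :
      {n : ℕ | 1 ≤ n ∧ (n : ℝ) ≤ x ∧ μ n < c} = ↑((Ioc 0 X).filter (μ · < c)) := by
    ext n
    simp [Nat.le_floor_iff hx, X, Nat.one_le_iff_ne_zero, Nat.pos_iff_ne_zero, and_assoc]
  have hcount := card_filter_lt_mul_sub_le (Ioc 0 X) μ (c := c)
    fun n hn => hμa n (mem_Ioc.1 hn).1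
  have hsum : (X : ℝ) - ∑ d ∈ Ioc 0 X, w d * (X / d : ℕ) ≤ ∑ n ∈ Ioc 0 X, μ n := by
    rw [← ArithmeticFunction.sum_Ioc_mul_zeta_eq_sum]
    simp only [ArithmeticFunction.coe_mul_zeta_apply]
    simpa [sum_sub_distrib] using sum_le_sum fun n (_ : n ∈ Ioc 0 X) => hμw n
  have hdiv : ∑ d ∈ Ioc 0 X, w d * (X / d : ℕ) ≤ x * S := by
    refine le_trans ?_ (mul_le_mul_of_nonneg_left hS hx)
    rw [mul_sum]
    refine sum_le_sum fun d _ => ?_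
    calc w d * (X / d : ℕ) ≤ w d * (x / d) := by
          gcongr; · exact hw d
          exact Nat.cast_div_le.trans (by gcongr; exact Nat.floor_le hx)
      _ = x * (w d / d) := by ring
  rw [hset, Set.ncard_coe_finset]
  simp only [Nat.card_Ioc, tsub_zero] at hcount
  linarith

theorem density_normal_numerical_general
    (p q : ℕ) (hq4 : 4 ≤ q)
    (T : ℝ) (hT : 0 < T)
    (G : ℕ → ℝ)
    (hG : ∀ d : ℕ, G d = if Nat.gcd d p = 1 then
      (1 - ((q : ℝ) ^ orderOf (q : ZMod d))⁻¹) ^ (d.totient / orderOf (q : ZMod d))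
      else 1)
    (μ : ℕ → ℝ) (hμ : ∀ n : ℕ, μ n = ∏ d ∈ n.divisors, G d) :
    ∃ C : ℝ, 0 < C ∧ ∀ x : ℝ, C ≤ x →
      (Set.ncard {n : ℕ | 1 ≤ n ∧ (n : ℝ) ≤ x ∧
          μ n < 1 - 1 / (q : ℝ) - 1 / Real.sqrt q - T} : ℝ)
        ≤ x / (1 + T * Real.sqrt q) := by
  obtain rfl : G = normalFactor q p := funext hG
  refine ⟨6, by norm_num, fun x hx => ?_⟩
  set B : ℝ := (Set.ncard {n : ℕ | 1 ≤ n ∧ (n : ℝ) ≤ x ∧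
    μ n < 1 - 1 / (q : ℝ) - 1 / Real.sqrt q - T} : ℝ)
  have hcount : B * _ ≤ _ := ncard_lt_mul_le_of_sum_divisors (by linarith)
    (fun n hn => (hμ n).trans_le (prod_normalFactor_le p (by omega)))
    (fun n => (one_sub_sum_orderWeight_le_prod_normalFactor p n).trans_eq (hμ n).symm)
    (orderWeight_nonneg q) (sum_Ioc_orderWeight_div_le hq4 ⌊x⌋₊)
  set u := (√q)⁻¹
  have hsu : √q * u = 1 := mul_inv_cancel₀ (Real.sqrt_pos.2 (by positivity)).ne'
  have hu2 : (q : ℝ)⁻¹ = u ^ 2 := by rw [inv_pow, Real.sq_sqrt (Nat.cast_nonneg q)]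
  rw [one_div, one_div, hu2] at hcount
  have hfloor : x - 1 ≤ ⌊x⌋₊ := (Nat.sub_one_lt_floor x).le
  -- `x (u² + u - u²/6) - ⌊x⌋ u² ≤ x u` because `⌊x⌋ ≥ 5x/6` once `x ≥ 6`
  have hmain : B * (u + T) ≤ x * u := by
    nlinarith [mul_nonneg (sq_nonneg u) (by linarith : (0 : ℝ) ≤ ⌊x⌋₊ - 5 * x / 6)]
  rw [le_div_iff₀ (by positivity)]
  calc B * (1 + T * √q) = B * (u + T) * √q := by linear_combination (-B) * hsu
    _ ≤ x * u * √q := by gcongr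
    _ = x := by linear_combination x * hsu

/-- For a prime power `q ≥ 4` and fixed `T > 0`, there exists `C > 0` such that, for all
`x ≥ C`, the number of positive integers `n ≤ x` with
`μ_q(n) < 1 - 1/q - 1/√q - T` is at most `x/(1 + T√q)`. -/
theorem density_normal_numerical
    (p m q : ℕ) (hp : p.Prime) (hm : 0 < m) (hq : q = p ^ m) (hq4 : 4 ≤ q)
    (T : ℝ) (hT : 0 < T)
    (G : ℕ → ℝ)
    (hG : ∀ d : ℕ, G d = if Nat.gcd d p = 1 then
      (1 - ((q : ℝ) ^ orderOf (q : ZMod d))⁻¹) ^ (d.totient / orderOf (q : ZMod d))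
      else 1)
    (μ : ℕ → ℝ) (hμ : ∀ n : ℕ, μ n = ∏ d ∈ n.divisors, G d) :
    ∃ C : ℝ, 0 < C ∧ ∀ x : ℝ, C ≤ x →
      (Set.ncard {n : ℕ | 1 ≤ n ∧ (n : ℝ) ≤ x ∧
          μ n < 1 - 1 / (q : ℝ) - 1 / Real.sqrt q - T} : ℝ)
        ≤ x / (1 + T * Real.sqrt q) :=
  density_normal_numerical_general p q hq4 T hT G hG μ hμ
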